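/- arXiv:2603.15567 — 5 statements merged into one kernel-verified Lean document; each statement's English description precedes it below -/
import Mathlib

section
/- Let B be a family of increasing functions from ω^{<ω} to ω such that for every n ∈ ω the set {f ∈ B : f(∅) > n} is cofinal in (B, ≤*), i.e., for every g ∈ B there is f ∈ B with f(∅) > n and g ≤* f. Then for every s ∈ ω^{<ω}, the set {f ∈ B : s ∈ U(f)} is cofinal in (B, ≤*). -/
/-- `U(f) = {s ∈ ω^{<ω} : f(s↾i) ≠ s(i) for all i < |s|}`. -/
def UF (f : List ℕ → ℕ) : Set (List ℕ) :=
  {s | ∀ i (h : i < s.length), f (s.take i) ≠ s.get ⟨i, h⟩}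

/-- `f : ω^{<ω} → ω` is increasing. -/
def Increasing (f : List ℕ → ℕ) : Prop :=
  (∀ s t : List ℕ, s <+: t → s ≠ t → f s < f t) ∧
  (∀ (s : List ℕ) (n m : ℕ), n < m → f (s ++ [n]) < f (s ++ [m]))

/-- `g ≤* f`: `g s ≤ f s` for all but finitely many `s ∈ ω^{<ω}`. -/
def EvLE (g f : List ℕ → ℕ) : Prop := {s : List ℕ | ¬ g s ≤ f s}.Finite

theorem Increasing.apply_nil_le {f : List ℕ → ℕ} (hf : Increasing f) (t : List ℕ) :
    f [] ≤ f t := by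
  rcases eq_or_ne t [] with rfl | ht
  · rfl
  · exact (hf.1 [] t List.nil_prefix ht.symm).le

theorem mem_UF_of_forall_lt_apply_nil {f : List ℕ → ℕ} {s : List ℕ} (hf : ∀ t, f [] ≤ f t)
    (hs : ∀ x ∈ s, x < f []) : s ∈ UF f :=
  fun _ _ => ((hs _ (List.get_mem s _)).trans_le (hf _)).ne'

/-- If `B` is a family of increasing functions `ω^{<ω} → ω` such that for
every `n` the set `{f ∈ B : f(∅) > n}` is `≤*`-cofinal in `B`, then for every
`s ∈ ω^{<ω}` the set `{f ∈ B : s ∈ U(f)}` is `≤*`-cofinal in `B`. -/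
theorem stmt_4 (B : Set (List ℕ → ℕ)) (hinc : ∀ f ∈ B, Increasing f)
    (hcof : ∀ n : ℕ, ∀ g ∈ B, ∃ f ∈ B, n < f [] ∧ EvLE g f) :
    ∀ s : List ℕ, ∀ g ∈ B, ∃ f ∈ B, s ∈ UF f ∧ EvLE g f := by
  intro s g hg
  -- Taking `f [] > s.sum` puts every entry of `s` below `f [] ≤ f (s.take i)`.
  obtain ⟨f, hfB, hsum, hgf⟩ := hcof s.sum g hg
  refine ⟨f, hfB, mem_UF_of_forall_lt_apply_nil (hinc f hfB).apply_nil_le fun x hx => ?_, hgf⟩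
  exact (List.le_sum_of_mem hx).trans_lt hsum
end

section
/- Let F be a finite family of functions from ω^{<ω} to ω such that any two distinct members f ≠ g of F are eventually different, i.e., f(s) ≠ g(s) for all but finitely many s ∈ ω^{<ω}. Then the map sending a subset C ⊆ F to the intersection ⋂_{f∈C} U(f) (where the empty intersection is all of ω^{<ω}) is injective: if C₁, C₂ ⊆ F and C₁ ≠ C₂, then ⋂_{f∈C₁} U(f) ≠ ⋂_{f∈C₂} U(f). -/
/-!
Suppose `f ∈ C₁ \ C₂`. Pick `v` taking at every node a value no `g ∈ C₂` takes there; the branch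
`[], [v []], …` built by always following `v` lies in every `U(g)`, `g ∈ C₂`. Only finitely many nodes
`p` have `f p = g p` for some `g ∈ C₂`, so on the infinite branch there is a node `p` where `f` differs
from all of them. Then `p ++ [f p]` still lies in every `U(g)`, `g ∈ C₂`, but not in `U(f)`.
-/

theorem nil_mem_UF (f : List ℕ → ℕ) : [] ∈ UF f := fun _ h => absurd h (Nat.not_lt_zero _)

theorem append_singleton_mem_UF_iff (f : List ℕ → ℕ) (s : List ℕ) (a : ℕ) :
    s ++ [a] ∈ UF f ↔ s ∈ UF f ∧ f s ≠ a := by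
  simp only [UF, Set.mem_ofPred_eq, List.get_eq_getElem, List.length_append, List.length_singleton]
  constructor
  · intro h
    refine ⟨fun i hi => ?_, ?_⟩
    · simpa [List.take_append_of_le_length hi.le, List.getElem_append_left hi] using h i (by omega)
    · simpa using h s.length (by omega)
  · rintro ⟨hs, hfa⟩ i hi
    rcases Nat.lt_or_ge i s.length with hi' | hi'
    · simpa [List.take_append_of_le_length hi'.le, List.getElem_append_left hi'] using hs i hi'
    · obtain rfl : i = s.length := by omega
      simpa using hfa

theorem Finset.exists_forall_apply_ne {X β : Type*} [Infinite β] (C : Finset (X → β)) :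
    ∃ v : X → β, ∀ g ∈ C, ∀ x, g x ≠ v x := by
  classical
  choose v hv using fun x => Infinite.exists_notMem_finset (C.image (· x))
  exact ⟨v, fun g hg x h => hv x (h ▸ Finset.mem_image_of_mem _ hg)⟩

def branch (v : List ℕ → ℕ) : ℕ → List ℕ
  | 0 => []
  | n + 1 => branch v n ++ [v (branch v n)]

theorem length_branch (v : List ℕ → ℕ) (n : ℕ) : (branch v n).length = n := by
  induction n with
  | zero => rfl
  | succ n ih => simp [branch, ih]

theorem infinite_range_branch (v : List ℕ → ℕ) : (Set.range (branch v)).Infinite :=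
  Set.infinite_range_of_injective fun m n h => by
    simpa only [length_branch] using congrArg List.length h

theorem branch_mem_UF {g v : List ℕ → ℕ} (hgv : ∀ s, g s ≠ v s) (n : ℕ) : branch v n ∈ UF g := by
  induction n with
  | zero => exact nil_mem_UF g
  | succ n ih => exact (append_singleton_mem_UF_iff g _ _).2 ⟨ih, hgv _⟩

theorem exists_mem_biInter_UF_notMem_UF (C : Finset (List ℕ → ℕ)) (f : List ℕ → ℕ)
    (hfin : ∀ g ∈ C, {s | f s = g s}.Finite) :
    ∃ s ∈ ⋂ g ∈ C, UF g, s ∉ UF f := by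
  obtain ⟨v, hv⟩ := C.exists_forall_apply_ne
  have hE : (⋃ g ∈ C, {s | f s = g s}).Finite := C.finite_toSet.biUnion hfin
  obtain ⟨_, ⟨n, rfl⟩, hnE⟩ := ((infinite_range_branch v).sdiff hE).nonempty
  simp only [Set.mem_iUnion, Set.mem_ofPred_eq, not_exists] at hnE
  refine ⟨branch v n ++ [f (branch v n)], Set.mem_iInter₂.2 fun g hg => ?_, ?_⟩
  · exact (append_singleton_mem_UF_iff g _ _).2 ⟨branch_mem_UF (hv g hg) n, fun h => hnE g hg h.symm⟩
  · exact fun h => ((append_singleton_mem_UF_iff f _ _).1 h).2 rfl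

theorem biInter_UF_ne_of_mem_of_notMem {C₁ C₂ : Finset (List ℕ → ℕ)} {f : List ℕ → ℕ}
    (hfin : ∀ g ∈ C₂, {s | f s = g s}.Finite) (hf : f ∈ C₁) :
    (⋂ g ∈ C₁, UF g) ≠ (⋂ g ∈ C₂, UF g) := by
  obtain ⟨s, hs, hsf⟩ := exists_mem_biInter_UF_notMem_UF C₂ f hfin
  intro heq
  exact hsf (Set.mem_iInter₂.1 (heq ▸ hs) f hf)

/-- If `F` is a finite family of functions `ω^{<ω} → ω` whose distinct
members are pairwise eventually different, then `C ↦ ⋂_{f ∈ C} U(f)` is injective on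
subsets of `F` (the empty intersection being all of `ω^{<ω}`). -/
theorem stmt_10 (F : Finset (List ℕ → ℕ))
    (hed : ∀ f ∈ F, ∀ g ∈ F, f ≠ g → {s : List ℕ | f s = g s}.Finite) :
    ∀ C₁ C₂ : Finset (List ℕ → ℕ), C₁ ⊆ F → C₂ ⊆ F → C₁ ≠ C₂ →
      (⋂ f ∈ C₁, UF f) ≠ (⋂ f ∈ C₂, UF f) := by
  intro C₁ C₂ h₁ h₂ hne
  obtain ⟨f, hf⟩ : ∃ f, ¬(f ∈ C₁ ↔ f ∈ C₂) := not_forall.1 (mt Finset.ext hne)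
  have separate : ∀ {C C' : Finset (List ℕ → ℕ)}, C ⊆ F → C' ⊆ F → f ∈ C → f ∉ C' →
      (⋂ g ∈ C, UF g) ≠ (⋂ g ∈ C', UF g) := fun hC hC' hfC hfC' =>
    biInter_UF_ne_of_mem_of_notMem
      (fun g hg => hed f (hC hfC) g (hC' hg) (ne_of_mem_of_not_mem hg hfC').symm) hfC
  by_cases hf₁ : f ∈ C₁
  · exact separate h₁ h₂ hf₁ (hf ∘ iff_of_true hf₁)
  · exact (separate h₂ h₁ (by tauto) hf₁).symm
end

section
/- Let {h_i : i ∈ ω} be a countable family of functions from ω^{<ω} to ω, let g : ω^{<ω} → ω, and let y : ℕ → {0,1}. Then there exists an increasing function f : ω^{<ω} → ω such that h_i <* f for every i ∈ ω, g <* f, f(∅) > g(∅), and for every n ∈ ℕ the value f(⟨0,…,0⟩) at the sequence of n zeros is congruent to y(n) modulo 2. -/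
/-- `h <* f`: `h s < f s` for all but finitely many `s ∈ ω^{<ω}`. -/
def EvLT (h f : List ℕ → ℕ) : Prop := {s : List ℕ | ¬ h s < f s}.Finite

/-!
Enumerate `ω^{<ω}` injectively; at a sequence `s` of code `c`, the finitely many `h_i` with
`i ≤ c` are dominated by their maximum, so one function `D` dominates every `h_i` off a finite
set. Any function, here `g + D`, lies below an increasing one `B`, built by recursion on the
last entry of a sequence. Then `f = 2B + ε`, with `ε ∈ {0, 1}` prescribing the parity on the
sequences of zeros, is still increasing and does the job.
-/

open Filter

theorem exists_eventually_ge_of_countable {α : Type*} [Countable α] (h : ℕ → α → ℕ) :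
    ∃ D : α → ℕ, ∀ i, ∀ᶠ a in cofinite, h i a ≤ D a := by
  obtain ⟨c, hc⟩ := Countable.exists_injective_nat α
  refine ⟨fun a => (Finset.range (c a + 1)).sup (h · a), fun i => ?_⟩
  refine eventually_cofinite.mpr <| ((Set.finite_Iio i).preimage hc.injOn).subset fun a ha => ?_
  by_contra hle
  exact ha <| Finset.le_sup (f := (h · a)) <| Finset.mem_range.mpr <| by
    simp only [Set.mem_preimage, Set.mem_Iio, not_lt] at hle; omega

theorem increasing_of_lt_append {f : List ℕ → ℕ} (hsucc : ∀ s n, f s < f (s ++ [n]))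
    (hlast : ∀ s n m, n < m → f (s ++ [n]) < f (s ++ [m])) : Increasing f := by
  refine ⟨?_, hlast⟩
  rintro s t ⟨u, rfl⟩ hne
  induction u using List.reverseRecOn with
  | nil => simp at hne
  | append_singleton u a ih =>
    rw [← List.append_assoc]
    refine lt_of_le_of_lt ?_ (hsucc _ a)
    rcases eq_or_ne u [] with rfl | hu
    · simp
    · exact (ih (by simpa using hu)).le

theorem Increasing.two_mul_add {B e : List ℕ → ℕ} (hB : Increasing B) (he : ∀ s, e s ≤ 1) :
    Increasing fun s => 2 * B s + e s := by
  refine ⟨fun s t hst hne => ?_, fun s n m hnm => ?_⟩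
  · have := hB.1 s t hst hne
    have := he s
    dsimp only
    omega
  · have := hB.2 s n m hnm
    have := he (s ++ [n])
    dsimp only
    omega

section Majorant

variable (H : List ℕ → ℕ)

/-- `majorantRev H` takes sequences listed from their last entry backwards. -/
def majorantRev : List ℕ → ℕ
  | [] => H [] + 1
  | n :: r => majorantRev r + ∑ k ∈ Finset.range (n + 1), (H (r.reverse ++ [k]) + 1)

def majorant (s : List ℕ) : ℕ := majorantRev H s.reverse

theorem majorant_append_singleton (s : List ℕ) (n : ℕ) :
    majorant H (s ++ [n]) =
      majorant H s + ∑ k ∈ Finset.range (n + 1), (H (s ++ [k]) + 1) := by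
  simp [majorant, majorantRev]

theorem lt_majorant (s : List ℕ) : H s < majorant H s := by
  induction s using List.reverseRecOn with
  | nil => simp [majorant, majorantRev]
  | append_singleton s n _ =>
    rw [majorant_append_singleton, Finset.sum_range_succ]
    omega

theorem increasing_majorant : Increasing (majorant H) := by
  refine increasing_of_lt_append (fun s n => ?_) (fun s n m hnm => ?_)
  · rw [majorant_append_singleton, Finset.sum_range_succ]
    omega
  · have hsub : ∑ k ∈ Finset.range (n + 1), (H (s ++ [k]) + 1) ≤
        ∑ k ∈ Finset.range m, (H (s ++ [k]) + 1) :=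
      Finset.sum_le_sum_of_subset (Finset.range_subset_range.mpr hnm)
    rw [majorant_append_singleton, majorant_append_singleton, Finset.sum_range_succ _ m]
    omega

end Majorant

theorem exists_increasing_gt (H : List ℕ → ℕ) : ∃ B, Increasing B ∧ ∀ s, H s < B s :=
  ⟨majorant H, increasing_majorant H, lt_majorant H⟩

def zerosIndicator (y : ℕ → ℕ) (s : List ℕ) : ℕ := if ∀ x ∈ s, x = 0 then y s.length else 0

theorem zerosIndicator_le_one {y : ℕ → ℕ} (hy : ∀ n, y n ≤ 1) (s : List ℕ) :
    zerosIndicator y s ≤ 1 := by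
  unfold zerosIndicator
  split
  · exact hy _
  · exact zero_le_one

theorem zerosIndicator_replicate (y : ℕ → ℕ) (n : ℕ) :
    zerosIndicator y (List.replicate n 0) = y n := by
  simp [zerosIndicator, List.mem_replicate]

/-- Given countably many functions `h_i : ω^{<ω} → ω`, a function `g`,
and `y : ℕ → {0,1}`, there is an increasing `f` with `h_i <* f` for all `i`, `g <* f`,
`f(∅) > g(∅)`, and `f(⟨0,…,0⟩) ≡ y(n) (mod 2)` for the sequence of `n` zeros. -/
theorem stmt_11 (h : ℕ → List ℕ → ℕ) (g : List ℕ → ℕ) (y : ℕ → ℕ)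
    (hy : ∀ n, y n ≤ 1) :
    ∃ f : List ℕ → ℕ, Increasing f ∧
      (∀ i : ℕ, EvLT (h i) f) ∧
      EvLT g f ∧
      g [] < f [] ∧
      ∀ n : ℕ, f (List.replicate n 0) % 2 = y n := by
  obtain ⟨D, hD⟩ := exists_eventually_ge_of_countable h
  obtain ⟨B, hBinc, hBgt⟩ : ∃ B, Increasing B ∧ ∀ s, g s + D s < B s := exists_increasing_gt _
  have hgD : ∀ s, g s + D s < 2 * B s + zerosIndicator y s := fun s => by
    have := hBgt s
    omega
  refine ⟨fun s => 2 * B s + zerosIndicator y s,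
    hBinc.two_mul_add (zerosIndicator_le_one hy), fun i => ?_, ?_, ?_, fun n => ?_⟩
  · refine eventually_cofinite.mp <| (hD i).mono fun s hs => ?_
    have := hgD s
    dsimp only
    omega
  · exact eventually_cofinite.mp <| .of_forall fun s => le_self_add.trans_lt (hgD s)
  · exact le_self_add.trans_lt (hgD [])
  · have := hy n
    simp only [zerosIndicator_replicate]
    omega
end

section
/- Let I be an ideal on a countable set X. Suppose that for every Y ∈ I⁺, Player II has a winning strategy in the game G_Cat(I↾Y). Then I ≤_K nwd: there exists a function f : ℚ → X such that f⁻¹(A) is nowhere dense in ℚ for every A ∈ I. -/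
/-!
A winning strategy for Player II on `Y ∈ I⁺` yields countably many `I`-positive sets `Z ⊆ Y`,
namely the sets of all possible answers of the strategy at the countably many positions in which
Player I has so far only made moves realising earlier answers, and every `A ∈ I` misses one of
them: otherwise Player I could steer a play so that all of Player II's answers lie in `A`.
Iterating gives positive sets `Y_s`, `s ∈ ω^<ω`, with `Y_{s⌢b} ⊆ Y_s` and every `A ∈ I` missing
some `Y_{s⌢b}` below each `s`.

On the other side, ℚ carries a tree of nonempty clopen sets `R_s` (cells of the dyadic grid
shifted by `√2`) with pairwise disjoint children, forming a π-base, in which every rational lies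
on a finite branch only. Sending a rational to a point of `Y_t`, `t` the end of its branch, works:
a nonempty open `U` contains some `R_s`, and if `Y_{s⌢b}` misses `A` then the nonempty open
`R_{s⌢b} ⊆ U` misses `f⁻¹(A)`.
-/

open Set

namespace KatetovNwd

/-- Nowhere density in the tree `ω^<ω`, with the root `[]` and `j :: s` the `j`-th child of `s`
(so `s <:+ t` says that `t` extends `s`), for the topology generated by the cones. -/
def TreeNowhereDense (B : Set (List ℕ)) : Prop :=
  ∀ s, ∃ t, s <:+ t ∧ ∀ u, t <:+ u → u ∉ B

lemma subset_of_suffix {α : Type*} {F : List ℕ → Set α} (hF : ∀ j s, F (j :: s) ⊆ F s)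
    {s t : List ℕ} (h : s <:+ t) : F t ⊆ F s := by
  obtain ⟨l, rfl⟩ := h
  induction l with
  | nil => exact subset_rfl
  | cons j l ih => exact (hF j _).trans ih

section Game

variable {X : Type*} (I : Set (Set X)) (Y : Set X) (τ : List (Set X) → Set X → X)

def IsLegalStrategy : Prop :=
  ∀ (p : List (Set X)) (A : Set X), (∀ B ∈ p, B ∈ I ∧ B ⊆ Y) → A ∈ I → A ⊆ Y → τ p A ∈ Y \ A

def IsWinningStrategy : Prop :=
  ∀ A : ℕ → Set X, (∀ n, A n ∈ I ∧ A n ⊆ Y) → range (fun n ↦ τ ((List.range n).map A) (A n)) ∉ I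

def responses (p : List (Set X)) : Set X :=
  {x | ∃ A ∈ I, A ⊆ Y ∧ τ p A = x}

open Classical in
def realise (p : List (Set X)) (x : X) : Set X :=
  if h : x ∈ responses I Y τ p then h.choose else ∅

-- the position reached when Player I realises the answers listed (last one first) in `σ`
def positions : List X → List (Set X) :=
  List.foldr (fun x p ↦ p ++ [realise I Y τ p x]) []

variable {I Y τ}

lemma realise_mem (hempty : ∅ ∈ I) (p : List (Set X)) (x : X) :
    realise I Y τ p x ∈ I ∧ realise I Y τ p x ⊆ Y := by
  unfold realise
  split_ifs with h
  · exact ⟨h.choose_spec.1, h.choose_spec.2.1⟩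
  · exact ⟨hempty, empty_subset _⟩

lemma apply_realise {p : List (Set X)} {x : X} (h : x ∈ responses I Y τ p) :
    τ p (realise I Y τ p x) = x := by
  rw [realise, dif_pos h]
  exact h.choose_spec.2.2

lemma positions_legal (hempty : ∅ ∈ I) (σ : List X) :
    ∀ B ∈ positions I Y τ σ, B ∈ I ∧ B ⊆ Y := by
  induction σ with
  | nil => simp [positions]
  | cons x σ ih =>
    intro B hB
    rcases List.mem_append.mp hB with hB | hB
    · exact ih B hB
    · rw [List.mem_singleton.mp hB]
      exact realise_mem hempty _ _

lemma responses_subset (hτ : IsLegalStrategy I Y τ) {p : List (Set X)}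
    (hp : ∀ B ∈ p, B ∈ I ∧ B ⊆ Y) :
    responses I Y τ p ⊆ Y := by
  rintro _ ⟨A, hA, hAY, rfl⟩
  exact (hτ p A hp hA hAY).1

-- Otherwise Player I could play the set of all responses itself.
lemma responses_notMem (hτ : IsLegalStrategy I Y τ) {p : List (Set X)}
    (hp : ∀ B ∈ p, B ∈ I ∧ B ⊆ Y) :
    responses I Y τ p ∉ I := fun hI ↦
  (hτ p _ hp hI (responses_subset hτ hp)).2 ⟨_, hI, responses_subset hτ hp, rfl⟩

lemma exists_disjoint_responses (hempty : ∅ ∈ I) (hdown : ∀ A ∈ I, ∀ B : Set X, B ⊆ A → B ∈ I)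
    (hτ : IsWinningStrategy I Y τ) {A : Set X} (hA : A ∈ I) :
    ∃ σ, Disjoint (responses I Y τ (positions I Y τ σ)) A := by
  by_contra! hmeet
  choose pick hpickR hpickA using fun σ ↦ not_disjoint_iff.mp (hmeet σ)
  let run : ℕ → List X := fun n ↦ (fun σ ↦ pick σ :: σ)^[n] []
  let moves : ℕ → Set X := fun n ↦ realise I Y τ (positions I Y τ (run n)) (pick (run n))
  have hrun : ∀ n, (List.range n).map moves = positions I Y τ (run n) := by
    intro n
    induction n with
    | zero => rfl
    | succ n ih =>
      rw [List.range_succ, List.map_append, ih]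
      simp only [run, Function.iterate_succ_apply', positions, List.foldr_cons,
        List.map_singleton, moves]
  refine hτ moves (fun n ↦ realise_mem hempty _ _) (hdown A hA _ ?_)
  rintro _ ⟨n, rfl⟩
  simp only [hrun, moves, apply_realise (hpickR _)]
  exact hpickA _

theorem exists_seq_disjoint_of_winning [Countable X] (hempty : ∅ ∈ I)
    (hdown : ∀ A ∈ I, ∀ B : Set X, B ⊆ A → B ∈ I) (hlegal : IsLegalStrategy I Y τ)
    (hwin : IsWinningStrategy I Y τ) :
    ∃ Z : ℕ → Set X, (∀ n, Z n ∉ I ∧ Z n ⊆ Y) ∧ ∀ A ∈ I, ∃ n, Disjoint (Z n) A := by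
  obtain ⟨e, he⟩ := exists_surjective_nat (List X)
  refine ⟨fun n ↦ responses I Y τ (positions I Y τ (e n)), fun n ↦
    ⟨responses_notMem hlegal (positions_legal hempty _),
      responses_subset hlegal (positions_legal hempty _)⟩, fun A hA ↦ ?_⟩
  obtain ⟨σ, hσ⟩ := exists_disjoint_responses hempty hdown hwin hA
  obtain ⟨n, rfl⟩ := he σ
  exact ⟨n, hσ⟩

end Game

theorem exists_treeNowhereDense_preimage {X : Type*} {I : Set (Set X)} (hempty : ∅ ∈ I)
    (huniv : univ ∉ I)
    (hsplit : ∀ Y, Y ∉ I → ∃ Z : ℕ → Set X, (∀ n, Z n ∉ I ∧ Z n ⊆ Y) ∧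
      ∀ A ∈ I, ∃ n, Disjoint (Z n) A) :
    ∃ h : List ℕ → X, ∀ A ∈ I, TreeNowhereDense (h ⁻¹' A) := by
  choose! Z hZ hZA using hsplit
  let Y : List ℕ → Set X := List.foldr (fun b Y ↦ Z Y b) univ
  have hY : ∀ s, Y s ∉ I := by
    intro s
    induction s with
    | nil => exact huniv
    | cons b s ih => exact (hZ _ ih b).1
  have hYcons : ∀ b s, Y (b :: s) ⊆ Y s := fun b s ↦ (hZ _ (hY s) b).2
  have hYne : ∀ s, (Y s).Nonempty := fun s ↦
    nonempty_iff_ne_empty.mpr fun he ↦ hY s (he ▸ hempty)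
  choose h hh using hYne
  refine ⟨h, fun A hA s ↦ ?_⟩
  obtain ⟨b, hb⟩ := hZA _ (hY s) A hA
  exact ⟨b :: s, List.suffix_cons b s,
    fun u hu ↦ hb.notMem_of_mem_left (subset_of_suffix hYcons hu (hh u))⟩

section Branch

variable {S : Type*} {R : List ℕ → Set S}

lemma eq_of_mem_of_length_eq (hcons : ∀ j s, R (j :: s) ⊆ R s)
    (hdisj : ∀ s i j, i ≠ j → Disjoint (R (i :: s)) (R (j :: s))) {x : S} :
    ∀ {s t : List ℕ}, x ∈ R s → x ∈ R t → s.length = t.length → s = t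
  | [], [], _, _, _ => rfl
  | i :: s, j :: t, hs, ht, hl => by
    obtain rfl := eq_of_mem_of_length_eq hcons hdisj (hcons i s hs) (hcons j t ht)
      (Nat.succ.inj hl)
    by_contra hij
    exact disjoint_left.mp (hdisj s i j fun h ↦ hij (h ▸ rfl)) hs ht

theorem exists_branch (hnil : R [] = univ) (hcons : ∀ j s, R (j :: s) ⊆ R s)
    (hdisj : ∀ s i j, i ≠ j → Disjoint (R (i :: s)) (R (j :: s)))
    (hbdd : ∀ x, ∃ N, ∀ s, x ∈ R s → s.length ≤ N) :
    ∃ g : S → List ℕ, ∀ s x, x ∈ R s ↔ s <:+ g x := by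
  have hlongest : ∀ x, ∃ s, x ∈ R s ∧ ∀ t, x ∈ R t → t.length ≤ s.length := by
    intro x
    classical
    obtain ⟨N, hN⟩ := hbdd x
    let P n := ∃ s, x ∈ R s ∧ s.length = n
    obtain ⟨s, hs, hlen⟩ : P (Nat.findGreatest P N) :=
      Nat.findGreatest_spec (P := P) (Nat.zero_le N) ⟨[], hnil ▸ mem_univ x, rfl⟩
    exact ⟨s, hs, fun t ht ↦ hlen ▸ Nat.le_findGreatest (hN t ht) ⟨t, ht, rfl⟩⟩
  choose g hg hmax using hlongest
  refine ⟨g, fun s x ↦ ⟨fun hs ↦ ?_, fun h ↦ subset_of_suffix hcons h (hg x)⟩⟩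
  have hsuf : (g x).drop ((g x).length - s.length) <:+ g x := List.drop_suffix _ _
  have hlen := hmax x s hs
  rw [eq_of_mem_of_length_eq hcons hdisj hs (subset_of_suffix hcons hsuf (hg x))
    (by simp only [List.length_drop]; omega)]
  exact hsuf

lemma isNowhereDense_preimage [TopologicalSpace S] {g : S → List ℕ}
    (hg : ∀ s x, x ∈ R s ↔ s <:+ g x) (hopen : ∀ s, IsOpen (R s)) (hne : ∀ s, (R s).Nonempty)
    (hbase : ∀ U, IsOpen U → U.Nonempty → ∃ s, R s ⊆ U) {B : Set (List ℕ)}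
    (hB : TreeNowhereDense B) : IsNowhereDense (g ⁻¹' B) := by
  by_contra hU
  obtain ⟨s, hs⟩ := hbase _ isOpen_interior (nonempty_iff_ne_empty.mpr hU)
  obtain ⟨t, hst, ht⟩ := hB s
  obtain ⟨y, hy⟩ := hne t
  have hts : R t ⊆ R s := fun x hx ↦ (hg s x).mpr (hst.trans ((hg t x).mp hx))
  obtain ⟨x, hxB, hxt⟩ := (closure_inter_open_nonempty_iff (hopen t)).mp
    ⟨y, interior_subset (hs (hts hy)), hy⟩
  exact ht _ ((hg t x).mp hxt) hxB

end Branch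

noncomputable section

def addr (n : ℕ) (q : ℚ) : ℤ := ⌊((q : ℝ) - √2) * 2 ^ n⌋

/-- The trace on ℚ of the dyadic interval `(√2 + k / 2ⁿ, √2 + (k + 1) / 2ⁿ)`, `c = (n, k)`; the
irrational shift makes it clopen in ℚ. -/
def cellSet (c : ℕ × ℤ) : Set ℚ := {q | addr c.1 q = c.2}

lemma addr_succ_div_two (n : ℕ) (q : ℚ) : addr (n + 1) q / 2 = addr n q := by
  have h := Int.floor_div_natCast (((q : ℝ) - √2) * 2 ^ (n + 1)) 2
  rw [Nat.cast_ofNat, Nat.cast_ofNat] at h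
  rw [addr, addr, ← h]
  congr 1
  ring

lemma addr_eq_of_le {m n : ℕ} (hmn : m ≤ n) {p q : ℚ} (h : addr n p = addr n q) :
    addr m p = addr m q := by
  induction n, hmn using Nat.le_induction with
  | base => exact h
  | succ n _ ih => exact ih (by rw [← addr_succ_div_two, h, addr_succ_div_two])

lemma cellSet_eq (n : ℕ) (k : ℤ) :
    cellSet (n, k) = (fun q : ℚ ↦ ((q : ℝ) - √2) * 2 ^ n) ⁻¹' Ioo (k : ℝ) (k + 1) := by
  ext q
  have hirr : Irrational (((q : ℝ) - √2) * ((2 ^ n : ℕ) : ℝ)) :=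
    (irrational_sqrt_two.ratCast_sub q).mul_natCast (by positivity)
  push_cast at hirr
  simp only [cellSet, addr, mem_ofPred_eq, Int.floor_eq_iff, mem_preimage, mem_Ioo]
  exact and_congr_left fun _ ↦ le_iff_lt_or_eq.trans (or_iff_left (hirr.ne_int k).symm)

lemma isOpen_cellSet (c : ℕ × ℤ) : IsOpen (cellSet c) := by
  rw [cellSet_eq]
  exact isOpen_Ioo.preimage ((Rat.continuous_coe_real.sub continuous_const).mul continuous_const)

lemma cellSet_nonempty (c : ℕ × ℤ) : (cellSet c).Nonempty := by
  obtain ⟨n, k⟩ := c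
  have hpos : (0 : ℝ) < 2 ^ n := by positivity
  obtain ⟨q, hlo, hhi⟩ := exists_rat_btwn
    (show √2 + k / 2 ^ n < √2 + (k + 1) / 2 ^ n by gcongr; linarith)
  refine ⟨q, ?_⟩
  rw [cellSet_eq, mem_preimage, mem_Ioo, ← lt_div_iff₀ hpos, ← div_lt_iff₀ hpos]
  constructor <;> linarith

lemma abs_sub_mul_lt_one_of_addr_eq {n : ℕ} {p q : ℚ} (h : addr n p = addr n q) :
    |(p : ℝ) - q| * 2 ^ n < 1 := by
  have := Int.abs_sub_lt_one_of_floor_eq_floor h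
  rwa [← sub_mul, sub_sub_sub_cancel_right, abs_mul, abs_of_pos (by positivity : (0 : ℝ) < 2 ^ n)]
    at this

lemma exists_addr_ne {p q : ℚ} (hpq : p ≠ q) : ∃ n, addr n p ≠ addr n q := by
  have hpos : 0 < |(p : ℝ) - q| := abs_pos.mpr (sub_ne_zero.mpr (Rat.cast_injective.ne hpq))
  obtain ⟨n, hn⟩ := pow_unbounded_of_one_lt |(p : ℝ) - q|⁻¹ one_lt_two
  refine ⟨n, fun h ↦ (abs_sub_mul_lt_one_of_addr_eq h).not_ge ?_⟩
  rw [inv_lt_iff_one_lt_mul₀ hpos] at hn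
  linarith

lemma exists_cellSet_subset {U : Set ℚ} (hU : IsOpen U) {q : ℚ} (hq : q ∈ U) :
    ∃ n, cellSet (n, addr n q) ⊆ U := by
  obtain ⟨ε, hε, hball⟩ := Metric.isOpen_iff.mp hU q hq
  obtain ⟨n, hn⟩ := pow_unbounded_of_one_lt ε⁻¹ one_lt_two
  refine ⟨n, fun p hp ↦ hball ?_⟩
  have hp := abs_sub_mul_lt_one_of_addr_eq (show addr n p = addr n q from hp)
  rw [inv_lt_iff_one_lt_mul₀ hε] at hn
  rw [Metric.mem_ball, Rat.dist_eq]
  nlinarith [abs_nonneg ((p : ℝ) - q), (by positivity : (0 : ℝ) < 2 ^ n)]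

def first (c : ℕ × ℤ) : ℚ :=
  Function.argminOn Encodable.encode (cellSet c) (cellSet_nonempty c)

lemma first_mem (c : ℕ × ℤ) : first c ∈ cellSet c := Function.argminOn_mem _ _ _

lemma encode_first_le {c : ℕ × ℤ} {q : ℚ} (hq : q ∈ cellSet c) :
    Encodable.encode (first c) ≤ Encodable.encode q :=
  Function.argminOn_le _ _ hq

-- The other half of the parent of `r`'s cell at level `n + 1`:
-- `4a + 1 - b` swaps `b = 2a` and `b = 2a + 1`.
def siblingCell (n : ℕ) (r : ℚ) : ℕ × ℤ := (n + 1, 4 * addr n r + 1 - addr (n + 1) r)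

lemma mem_siblingCell_iff {n : ℕ} {r q : ℚ} :
    q ∈ cellSet (siblingCell n r) ↔ addr n q = addr n r ∧ addr (n + 1) q ≠ addr (n + 1) r := by
  have hq := addr_succ_div_two n q
  have hr := addr_succ_div_two n r
  simp only [cellSet, siblingCell, mem_ofPred_eq]
  omega

/-- The children of `c` are the siblings of the cells of `first c` at the levels
`c.1 + 1, c.1 + 2, …`; they partition `cellSet c \ {first c}`. -/
def childCell (c : ℕ × ℤ) (j : ℕ) : ℕ × ℤ := siblingCell (c.1 + j) (first c)

lemma childCell_subset_cellSet_first (c : ℕ × ℤ) (j : ℕ) :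
    cellSet (childCell c j) ⊆ cellSet (c.1 + j, addr (c.1 + j) (first c)) :=
  fun _ hq ↦ (mem_siblingCell_iff.mp hq).1

lemma childCell_subset (c : ℕ × ℤ) (j : ℕ) : cellSet (childCell c j) ⊆ cellSet c :=
  fun _ hq ↦ (addr_eq_of_le (Nat.le_add_right _ _) (childCell_subset_cellSet_first c j hq)).trans
    (first_mem c)

lemma first_notMem_childCell (c : ℕ × ℤ) (j : ℕ) : first c ∉ cellSet (childCell c j) :=
  fun h ↦ (mem_siblingCell_iff.mp h).2 rfl

lemma disjoint_childCell (c : ℕ × ℤ) {i j : ℕ} (hij : i ≠ j) :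
    Disjoint (cellSet (childCell c i)) (cellSet (childCell c j)) := by
  wlog hlt : i < j generalizing i j
  · exact (this hij.symm (by omega)).symm
  refine disjoint_left.mpr fun q hi hj ↦ (mem_siblingCell_iff.mp hi).2 ?_
  exact addr_eq_of_le (by omega) (mem_siblingCell_iff.mp hj).1

lemma exists_mem_childCell {c : ℕ × ℤ} {q : ℚ} (hq : q ∈ cellSet c) (hne : q ≠ first c) :
    ∃ j, q ∈ cellSet (childCell c j) := by
  classical
  set N := Nat.find (exists_addr_ne hne)
  have hN : addr N q ≠ addr N (first c) := Nat.find_spec (exists_addr_ne hne)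
  have hmin : ∀ n < N, addr n q = addr n (first c) := fun n hn ↦ not_not.mp (Nat.find_min _ hn)
  have hcN : c.1 < N := by
    by_contra! h
    exact hN (addr_eq_of_le h (hq.trans (first_mem c).symm))
  refine ⟨N - c.1 - 1, mem_siblingCell_iff.mpr ⟨hmin _ (by omega), ?_⟩⟩
  rwa [show c.1 + (N - c.1 - 1) + 1 = N by omega]

lemma encode_first_lt (c : ℕ × ℤ) (j : ℕ) :
    Encodable.encode (first c) < Encodable.encode (first (childCell c j)) := by
  refine (encode_first_le (childCell_subset c j (first_mem _))).lt_of_ne fun h ↦ ?_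
  exact first_notMem_childCell c j (Encodable.encode_injective h ▸ first_mem _)

def nodeCell (j : ℕ) : List ℕ → ℕ × ℤ
  | [] => (0, Equiv.intEquivNat.symm j)
  | i :: s => childCell (nodeCell i s) j

def nodeSet : List ℕ → Set ℚ
  | [] => univ
  | j :: s => cellSet (nodeCell j s)

lemma nodeSet_cons_subset (j : ℕ) : ∀ s, nodeSet (j :: s) ⊆ nodeSet s
  | [] => subset_univ _
  | i :: s => childCell_subset (nodeCell i s) j

lemma disjoint_nodeSet {i j : ℕ} (hij : i ≠ j) :
    ∀ s, Disjoint (nodeSet (i :: s)) (nodeSet (j :: s))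
  | [] => disjoint_left.mpr fun _ hi hj ↦
      hij (Equiv.intEquivNat.symm.injective (hi.symm.trans hj))
  | k :: s => disjoint_childCell (nodeCell k s) hij

lemma length_le_encode_first (j : ℕ) (s : List ℕ) :
    s.length ≤ Encodable.encode (first (nodeCell j s)) := by
  induction s generalizing j with
  | nil => exact Nat.zero_le _
  | cons i s ih => exact (ih i).trans_lt (encode_first_lt _ _)

lemma length_le_encode {q : ℚ} : ∀ {s}, q ∈ nodeSet s → s.length ≤ Encodable.encode q + 1
  | [], _ => Nat.zero_le _
  | j :: s, hq => Nat.succ_le_succ ((length_le_encode_first j s).trans (encode_first_le hq))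

lemma isOpen_nodeSet : ∀ s, IsOpen (nodeSet s)
  | [] => isOpen_univ
  | j :: s => isOpen_cellSet (nodeCell j s)

lemma nodeSet_nonempty : ∀ s, (nodeSet s).Nonempty
  | [] => univ_nonempty
  | j :: s => cellSet_nonempty (nodeCell j s)

lemma exists_nodeSet_subset {g : ℚ → List ℕ} (hg : ∀ s q, q ∈ nodeSet s ↔ s <:+ g q)
    {U : Set ℚ} (hU : IsOpen U) {q : ℚ} (hq : q ∈ U) : ∃ s, nodeSet s ⊆ U := by
  obtain ⟨n, hn⟩ := exists_cellSet_subset hU hq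
  -- `q` is the `first` point of the last node of its branch, whose deep children hug `q`
  have hleaf : ∀ j, q ∉ nodeSet (j :: g q) := fun j h ↦ by
    simpa using ((hg _ _).mp h).length_le
  have hqg : q ∈ nodeSet (g q) := (hg _ _).mpr List.suffix_rfl
  cases hgq : g q with
  | nil =>
    exact (hleaf (Equiv.intEquivNat (addr 0 q)) (by simp [hgq, nodeSet, nodeCell, cellSet])).elim
  | cons i s =>
    rw [hgq] at hleaf hqg
    have hfirst : q = first (nodeCell i s) := by
      by_contra h
      obtain ⟨j, hj⟩ := exists_mem_childCell hqg h
      exact hleaf j hj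
    refine ⟨(n - (nodeCell i s).1) :: i :: s, fun p hp ↦ hn ?_⟩
    have := childCell_subset_cellSet_first _ _ hp
    rw [← hfirst] at this
    exact addr_eq_of_le (by omega) this

theorem exists_isNowhereDense_preimage_rat :
    ∃ g : ℚ → List ℕ, ∀ B, TreeNowhereDense B → IsNowhereDense (g ⁻¹' B) := by
  obtain ⟨g, hg⟩ := exists_branch (R := nodeSet) rfl nodeSet_cons_subset
    (fun s _ _ hij ↦ disjoint_nodeSet hij s) fun _ ↦ ⟨_, fun _ ↦ length_le_encode⟩
  exact ⟨g, fun B ↦ isNowhereDense_preimage hg isOpen_nodeSet nodeSet_nonempty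
    fun U hU ⟨q, hq⟩ ↦ exists_nodeSet_subset hg hU hq⟩

end

end KatetovNwd

theorem stmt_14_general (X : Type) [Countable X] (I : Set (Set X))
    (hempty : ∅ ∈ I) (huniv : Set.univ ∉ I)
    (hdown : ∀ A ∈ I, ∀ B : Set X, B ⊆ A → B ∈ I)
    (hwin : ∀ Y : Set X, Y ∉ I →
      ∃ τ : List (Set X) → Set X → X,
        (∀ (prev : List (Set X)) (A : Set X),
          (∀ B ∈ prev, B ∈ I ∧ B ⊆ Y) → A ∈ I → A ⊆ Y → τ prev A ∈ Y \ A) ∧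
        (∀ A : ℕ → Set X, (∀ n, A n ∈ I ∧ A n ⊆ Y) →
          Set.range (fun n => τ ((List.range n).map A) (A n)) ∉ I)) :
    ∃ f : ℚ → X, ∀ A ∈ I, interior (closure (f ⁻¹' A)) = (∅ : Set ℚ) := by
  obtain ⟨h, hh⟩ := KatetovNwd.exists_treeNowhereDense_preimage hempty huniv fun Y hY ↦ by
    obtain ⟨τ, hlegal, hwins⟩ := hwin Y hY
    exact KatetovNwd.exists_seq_disjoint_of_winning hempty hdown hlegal hwins
  obtain ⟨g, hg⟩ := KatetovNwd.exists_isNowhereDense_preimage_rat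
  exact ⟨h ∘ g, fun A hA ↦ hg _ (hh A hA)⟩

/-- Let `I` be an ideal on a countable set `X`. If for every `Y ∈ I⁺`
Player II has a winning strategy in `G_Cat(I↾Y)`, then `I ≤_K nwd`: there is
`f : ℚ → X` with `f⁻¹(A)` nowhere dense in `ℚ` for every `A ∈ I`.

A strategy for Player II is encoded as a function `τ` of the finite sequence
`⟨A₀,…,A_{n-1}⟩` of Player I's earlier moves together with his current move `A_n`;
legality says the response lies in `Y ∖ A_n` whenever all moves belong to `I↾Y`,
and winning says the set of responses to any run is `(I↾Y)`-positive (not in `I`). -/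
theorem stmt_14 (X : Type) [Countable X] (I : Set (Set X))
    (hempty : ∅ ∈ I) (huniv : Set.univ ∉ I)
    (hdown : ∀ A ∈ I, ∀ B : Set X, B ⊆ A → B ∈ I)
    (hunion : ∀ A ∈ I, ∀ B ∈ I, A ∪ B ∈ I)
    (hwin : ∀ Y : Set X, Y ∉ I →
      ∃ τ : List (Set X) → Set X → X,
        (∀ (prev : List (Set X)) (A : Set X),
          (∀ B ∈ prev, B ∈ I ∧ B ⊆ Y) → A ∈ I → A ⊆ Y → τ prev A ∈ Y \ A) ∧
        (∀ A : ℕ → Set X, (∀ n, A n ∈ I ∧ A n ⊆ Y) →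
          Set.range (fun n => τ ((List.range n).map A) (A n)) ∉ I)) :
    ∃ f : ℚ → X, ∀ A ∈ I, interior (closure (f ⁻¹' A)) = (∅ : Set ℚ) :=
  stmt_14_general X I hempty huniv hdown hwin
end

section
/- Let I be an ideal on ℕ and let F : ℕ^ℕ → I⁺ be a continuous surjection (where I⁺ is viewed inside the Cantor space 2^ℕ via characteristic functions). If Player I has a winning strategy in the game H_Cat(I,F), then Player I has a winning strategy in the game G_Cat(I). -/
open Classical in
/-- Identification of subsets of `ℕ` with points of the Cantor space `2^ℕ` via
characteristic functions. -/
noncomputable def chi (A : Set ℕ) : ℕ → Bool := fun n => decide (n ∈ A)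

/-- Given Player II's second coordinates `m : ℕ → ℤ` (with `-1` meaning "no move"),
`tildeg m ∈ ℕ^ℕ` is obtained by deleting the `-1`s and compressing: `tildeg m i = m nᵢ`
where `n₀ < n₁ < …` enumerates `{n : m n ≠ -1}`. -/
noncomputable def tildeg (m : ℕ → ℤ) : ℕ → ℕ :=
  fun i => (m (Nat.nth (fun n => m n ≠ -1) i)).toNat

/-!
Player I collapses a winning strategy `σ` for `H_Cat(I,F)` into a strategy for `G_Cat(I)`:
after Player II has played `b₀, …, b_{n-1}`, play the union of `σ`'s answers to all the
finitely many legal histories `(b₀, m₀), …, (b_{n-1}, m_{n-1})`. This is a finite union, so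
it lies in `I`. If Player II could win against it with `{bₙ}` positive, write
`{bₙ} = F x`; Player II can then code `x` into the `mₙ`, playing `mₙ = x i` at a sparse
sequence of rounds `nᵢ > x i` and `-1` elsewhere, so that `tildeg m = x`. The resulting run
of `H_Cat(I,F)` follows `σ` and is won by Player II.
-/

theorem Nat.nth_eq_of_strictMono {p : ℕ → Prop} {s : ℕ → ℕ} (hs : StrictMono s)
    (hp : ∀ n, p n ↔ n ∈ Set.range s) : Nat.nth p = s := by
  have hset : Set.ofPred p = Set.range s := Set.ext hp
  have hinf : (Set.ofPred p).Infinite := hset ▸ Set.infinite_range_of_injective hs.injective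
  exact ((Nat.nth_strictMono hinf).range_inj hs).1 (by rw [Nat.range_nth_of_infinite hinf, hset])

theorem exists_strictMono_gt (x : ℕ → ℕ) : ∃ s : ℕ → ℕ, StrictMono s ∧ ∀ i, x i < s i := by
  refine ⟨fun i => ∑ j ∈ Finset.range (i + 1), (x j + 1),
    strictMono_nat_of_lt_succ fun i => ?_, fun i => ?_⟩
  · rw [Finset.sum_range_succ _ (i + 1)]
    omega
  · exact Finset.single_le_sum (f := fun j => x j + 1) (fun _ _ => Nat.zero_le _)
      (Finset.self_mem_range_succ i)

theorem exists_tildeg_eq (x : ℕ → ℕ) : ∃ m : ℕ → ℤ,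
    (∀ n, -1 ≤ m n ∧ m n < n) ∧ {n | m n ≠ -1}.Infinite ∧ tildeg m = x := by
  obtain ⟨s, hs, hxs⟩ := exists_strictMono_gt x
  set m := Function.extend s (fun i => (x i : ℤ)) (fun _ => -1)
  have hm_s (i : ℕ) : m (s i) = x i := hs.injective.extend_apply _ _ i
  have hm_off {n : ℕ} (hn : n ∉ Set.range s) : m n = -1 := Function.extend_apply' _ _ _ hn
  have hsupp (n : ℕ) : m n ≠ -1 ↔ n ∈ Set.range s := by
    refine ⟨fun h => by_contra fun hn => h (hm_off hn), ?_⟩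
    rintro ⟨i, rfl⟩
    rw [hm_s]
    omega
  refine ⟨m, fun n => ?_, ?_, ?_⟩
  · by_cases hn : n ∈ Set.range s
    · obtain ⟨i, rfl⟩ := hn
      rw [hm_s]
      exact ⟨by omega, by exact_mod_cast hxs i⟩
    · rw [hm_off hn]
      omega
  · rw [show {n | m n ≠ -1} = Set.range s from Set.ext hsupp]
    exact Set.infinite_range_of_injective hs.injective
  · funext i
    simp only [tildeg, Nat.nth_eq_of_strictMono hs hsupp, hm_s, Int.toNat_natCast]

/-- A legal answer `m i ∈ {-1, …, i-1}` of Player II is coded by `m i + 1 ∈ Fin (i + 1)`. -/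
noncomputable def collapseStrategy (σ : List (ℕ × ℤ) → Set ℕ) (l : List ℕ) : Set ℕ :=
  Finset.univ.sup fun c : (i : Fin l.length) → Fin (i + 1) =>
    σ (List.ofFn fun i => (l[i], (c i : ℤ) - 1))

theorem collapseStrategy_mem {I : Set (Set ℕ)} (hempty : ∅ ∈ I)
    (hunion : ∀ A ∈ I, ∀ B ∈ I, A ∪ B ∈ I) {σ : List (ℕ × ℤ) → Set ℕ} (hσI : ∀ l, σ l ∈ I)
    (l : List ℕ) : collapseStrategy σ l ∈ I :=
  Finset.sup_induction hempty hunion fun _ _ => hσI _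

theorem subset_collapseStrategy (σ : List (ℕ × ℤ) → Set ℕ) (b : ℕ → ℕ) {m : ℕ → ℤ}
    (hm : ∀ n, -1 ≤ m n ∧ m n < n) (n : ℕ) :
    σ ((List.range n).map fun i => (b i, m i)) ⊆ collapseStrategy σ ((List.range n).map b) := by
  set l := (List.range n).map b
  let c : (i : Fin l.length) → Fin (i + 1) := fun i =>
    ⟨(m i + 1).toNat, by have := hm i; omega⟩
  have hhist : (List.range n).map (fun i => (b i, m i)) =
      List.ofFn fun i : Fin l.length => (l[i], (c i : ℤ) - 1) := by
    apply List.ext_getElem (by simp [l])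
    intro i _ _
    have := hm i
    simp only [List.getElem_map, List.getElem_range, List.getElem_ofFn, Fin.getElem_fin,
      Int.ofNat_toNat, Prod.mk.injEq, true_and, l, c]
    omega
  rw [hhist]
  exact Finset.le_sup (f := fun c : (i : Fin l.length) → Fin (i + 1) =>
    σ (List.ofFn fun i => (l[i], (c i : ℤ) - 1))) (Finset.mem_univ c)

theorem stmt_16_general (I : Set (Set ℕ))
    (hempty : ∅ ∈ I)
    (hunion : ∀ A ∈ I, ∀ B ∈ I, A ∪ B ∈ I)
    (F : (ℕ → ℕ) → Set ℕ)
    (hFsurj : ∀ Y : Set ℕ, Y ∉ I → ∃ x, F x = Y)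
    (σ : List (ℕ × ℤ) → Set ℕ)
    (hσI : ∀ l, σ l ∈ I)
    (hσwin : ∀ (b : ℕ → ℕ) (m : ℕ → ℤ),
      (∀ n : ℕ, b n ∉ σ ((List.range n).map (fun i => (b i, m i))) ∧
        -1 ≤ m n ∧ m n < (n : ℤ)) →
      ¬ ({n : ℕ | m n ≠ -1}.Infinite ∧ F (tildeg m) = Set.range b)) :
    ∃ σ' : List ℕ → Set ℕ, (∀ l, σ' l ∈ I) ∧
      ∀ b : ℕ → ℕ, (∀ n, b n ∉ σ' ((List.range n).map b)) → Set.range b ∈ I := by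
  refine ⟨collapseStrategy σ, collapseStrategy_mem hempty hunion hσI, fun b hb => ?_⟩
  by_contra hbI
  obtain ⟨x, hx⟩ := hFsurj _ hbI
  obtain ⟨m, hm, hinf, rfl⟩ := exists_tildeg_eq x
  exact hσwin b m (fun n => ⟨fun hbn => hb n (subset_collapseStrategy σ b hm n hbn), hm n⟩)
    ⟨hinf, hx⟩

/-- Let `I` be an ideal on `ℕ` and `F : ℕ^ℕ → I⁺` a continuous surjection.
If Player I has a winning strategy in `H_Cat(I,F)`, then Player I has a winning strategy
in `G_Cat(I)`. Strategies for Player I are maps from finite sequences of Player II's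
previous moves into `I`; a run is legal if each of Player II's moves avoids the set just
played by Player I (and, in `H_Cat`, satisfies `-1 ≤ m_n < n`); a strategy of Player I is
winning if Player II wins no legal run against it. -/
theorem stmt_16 (I : Set (Set ℕ))
    (hempty : ∅ ∈ I) (huniv : Set.univ ∉ I)
    (hdown : ∀ A ∈ I, ∀ B : Set ℕ, B ⊆ A → B ∈ I)
    (hunion : ∀ A ∈ I, ∀ B ∈ I, A ∪ B ∈ I)
    (F : (ℕ → ℕ) → Set ℕ)
    (hFpos : ∀ x, F x ∉ I)
    (hFcont : Continuous (fun x => chi (F x)))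
    (hFsurj : ∀ Y : Set ℕ, Y ∉ I → ∃ x, F x = Y)
    (σ : List (ℕ × ℤ) → Set ℕ)
    (hσI : ∀ l, σ l ∈ I)
    (hσwin : ∀ (b : ℕ → ℕ) (m : ℕ → ℤ),
      (∀ n : ℕ, b n ∉ σ ((List.range n).map (fun i => (b i, m i))) ∧
        -1 ≤ m n ∧ m n < (n : ℤ)) →
      ¬ ({n : ℕ | m n ≠ -1}.Infinite ∧ F (tildeg m) = Set.range b)) :
    ∃ σ' : List ℕ → Set ℕ, (∀ l, σ' l ∈ I) ∧
      ∀ b : ℕ → ℕ, (∀ n, b n ∉ σ' ((List.range n).map b)) → Set.range b ∈ I :=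
  stmt_16_general I hempty hunion F hFsurj σ hσI hσwin
end
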